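/- arXiv:math/0205047 — 2 statements merged into one kernel-verified Lean document; each statement's English description precedes it below -/
import Mathlib

section
/- Let G be a loopless finite graph with n vertices and c connected components. Then for every real t with 0 < t < 1, the chromatic polynomial P(G,t) is non-zero and has sign (−1)^{n+c}. -/
open Polynomial

/-- A finite multigraph (loops and multiple edges allowed), given with a fixed
orientation of its edges: each edge `e` has a source `src e` and target `tgt e`. -/
structure Multigraph where
  V : Type
  E : Type
  [fintypeV : Fintype V]
  [fintypeE : Fintype E]
  [decEqV : DecidableEq V]
  [decEqE : DecidableEq E]
  src : E → V
  tgt : E → V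

attribute [instance] Multigraph.fintypeV Multigraph.fintypeE Multigraph.decEqV Multigraph.decEqE

namespace Multigraph

/-- The number of proper `t`-colourings of `G`. -/
noncomputable def properColorings (G : Multigraph) (t : ℕ) : ℕ :=
  Nat.card {f : G.V → Fin t // ∀ e : G.E, f (G.src e) ≠ f (G.tgt e)}

/-- `P` is the chromatic polynomial of `G`: its value at each positive integer `t`
is the number of proper `t`-colourings of `G`. -/
def IsChromaticPoly (G : Multigraph) (P : Polynomial ℝ) : Prop :=
  ∀ t : ℕ, 0 < t → P.eval (t : ℝ) = G.properColorings t

/-- `G` has no loops. -/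
def Loopless (G : Multigraph) : Prop := ∀ e : G.E, G.src e ≠ G.tgt e

/-- Deletion of the edge `e₀`. -/
def deleteEdge (G : Multigraph) (e₀ : G.E) : Multigraph where
  V := G.V
  E := {e : G.E // e ≠ e₀}
  src e := G.src e.1
  tgt e := G.tgt e.1

/-- Contraction of the edge `e₀`: its two endpoints are identified (the vertex
`src e₀` is merged into `tgt e₀`), and `e₀` is removed. -/
def contractEdge (G : Multigraph) (e₀ : G.E) : Multigraph where
  V := {v : G.V // v = G.src e₀ → v = G.tgt e₀}
  E := {e : G.E // e ≠ e₀}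
  src e := if h : G.src e.1 = G.src e₀ then ⟨G.tgt e₀, fun _ => rfl⟩
    else ⟨G.src e.1, fun hv => absurd hv h⟩
  tgt e := if h : G.tgt e.1 = G.src e₀ then ⟨G.tgt e₀, fun _ => rfl⟩
    else ⟨G.tgt e.1, fun hv => absurd hv h⟩

/-- Two vertices are connected by a walk using only edges in `A`. -/
def ReachOn (G : Multigraph) (A : Finset G.E) (a b : G.V) : Prop :=
  Relation.EqvGen (fun x y => ∃ e ∈ A, G.src e = x ∧ G.tgt e = y) a b

/-- The number of connected components of the spanning subgraph of `G`
with edge set `A`. -/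
noncomputable def numComponentsOn (G : Multigraph) (A : Finset G.E) : ℕ :=
  Nat.card (Quotient (Relation.EqvGen.setoid (fun x y => ∃ e ∈ A, G.src e = x ∧ G.tgt e = y)))

/-- The number of connected components of `G`. -/
noncomputable def numComponents (G : Multigraph) : ℕ := G.numComponentsOn Finset.univ

/-- `G` is connected. -/
def Conn (G : Multigraph) : Prop :=
  Nonempty G.V ∧ ∀ a b : G.V, G.ReachOn Finset.univ a b

/-- `e` is a bridge of `G`. -/
def IsBridge (G : Multigraph) (e : G.E) : Prop :=
  G.numComponents < (G.deleteEdge e).numComponents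

/-- A nowhere-zero `ZMod t`-flow on `G` (with respect to the fixed orientation). -/
def IsNZFlow (G : Multigraph) {t : ℕ} (f : G.E → ZMod t) : Prop :=
  (∀ e : G.E, f e ≠ 0) ∧
    ∀ v : G.V, (∑ e : G.E, if G.src e = v then f e else 0) =
      ∑ e : G.E, if G.tgt e = v then f e else 0

/-- The number of nowhere-zero `ZMod t`-flows of `G`. -/
noncomputable def numFlows (G : Multigraph) (t : ℕ) : ℕ :=
  Nat.card {f : G.E → ZMod t // G.IsNZFlow f}

/-- `F` is the flow polynomial of `G`: its value at each positive integer `t`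
is the number of nowhere-zero `ZMod t`-flows of `G`. -/
def IsFlowPoly (G : Multigraph) (F : Polynomial ℝ) : Prop :=
  ∀ t : ℕ, 0 < t → F.eval (t : ℝ) = G.numFlows t

end Multigraph

/-!
Induct on the number of edges, using deletion–contraction `P(G) = P(G - e) - P(G / e)` for an
edge `e`, which is not a loop. The graph `G / e` has one vertex fewer than `G` and as many
components. If the ends of `e` stay connected in `G - e`, then `G - e` also has as many components
as `G`, so both terms of `P(G - e) - P(G / e)` carry the sign `(-1)^(n+c)` (the second one may
vanish, when `G / e` has a loop). If `e` is a bridge, then `P(G - e) = t P(G / e)`, so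
`P(G) = (t - 1) P(G / e)` with `G / e` loopless, and `t - 1 < 0` supplies the missing sign.
-/

open Finset Relation

namespace Relation.EqvGen

variable {α β : Type*} {r : α → α → Prop} {s : β → β → Prop}

theorem map (f : α → β) (hf : ∀ a b, r a b → EqvGen s (f a) (f b)) {a b : α}
    (hab : EqvGen r a b) : EqvGen s (f a) (f b) :=
  Setoid.eqvGen_le (s := (EqvGen.setoid s).comap f) hf hab

theorem card_quotient_eq (f : α → β) (hf : ∀ a b, EqvGen r a b ↔ EqvGen s (f a) (f b))
    (hsurj : ∀ b, ∃ a, EqvGen s (f a) b) :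
    Nat.card (Quotient (EqvGen.setoid r)) = Nat.card (Quotient (EqvGen.setoid s)) := by
  refine Nat.card_eq_of_bijective (Quotient.map f fun a b h => (hf a b).1 h) ⟨?_, ?_⟩
  · rintro ⟨a⟩ ⟨b⟩ h
    exact Quotient.sound ((hf a b).2 (Quotient.exact h))
  · rintro ⟨b⟩
    obtain ⟨a, ha⟩ := hsurj b
    exact ⟨⟦a⟧, Quotient.sound ha⟩

end Relation.EqvGen

namespace Multigraph

variable {G : Multigraph} {e : G.E}

abbrev ProperColoring (G : Multigraph) (t : ℕ) : Type :=
  {f : G.V → Fin t // ∀ e, f (G.src e) ≠ f (G.tgt e)}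

theorem properColorings_eq_card (G : Multigraph) (t : ℕ) :
    G.properColorings t = Nat.card (G.ProperColoring t) := rfl

theorem reachOn_univ_src_tgt (G : Multigraph) (e : G.E) :
    G.ReachOn univ (G.src e) (G.tgt e) :=
  EqvGen.rel _ _ ⟨e, mem_univ _, rfl, rfl⟩

theorem card_edge_deleteEdge_lt (e : G.E) :
    Fintype.card (G.deleteEdge e).E < Fintype.card G.E :=
  Fintype.card_subtype_lt (not_not.2 rfl)

theorem properColorings_of_isEmpty [IsEmpty G.E] (t : ℕ) :
    G.properColorings t = t ^ Fintype.card G.V := by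
  rw [properColorings_eq_card, Nat.card_congr (Equiv.subtypeUnivEquiv fun _ => isEmptyElim),
    Nat.card_fun, Nat.card_eq_fintype_card, Nat.card_eq_fintype_card, Fintype.card_fin]

theorem properColorings_eq_zero_of_loop (he : G.src e = G.tgt e) (t : ℕ) :
    G.properColorings t = 0 :=
  @Nat.card_of_isEmpty _ ⟨fun f => f.2 e (congrArg f.1 he)⟩

theorem numComponents_of_isEmpty [IsEmpty G.E] : G.numComponents = Fintype.card G.V := by
  rw [← Nat.card_eq_fintype_card]
  refine (Nat.card_eq_of_bijective (Quotient.mk _) ⟨fun a b h => ?_, Quotient.mk_surjective⟩).symm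
  exact EqvGen.eqvGen_le (r' := Eq) (fun _ _ ⟨e, _⟩ => isEmptyElim e) a b (Quotient.exact h)

def properColoringDeleteEdgeEquiv (e : G.E) (t : ℕ) :
    {f : (G.deleteEdge e).ProperColoring t // f.1 (G.src e) ≠ f.1 (G.tgt e)} ≃
      G.ProperColoring t where
  toFun f := ⟨f.1.1, fun e' => if he : e' = e then he ▸ f.2 else f.1.2 ⟨e', he⟩⟩
  invFun g := ⟨⟨g.1, fun e' => g.2 e'.1⟩, g.2 e⟩
  left_inv _ := rfl
  right_inv _ := rfl

def contractMap (G : Multigraph) (e : G.E) (v : G.V) : (G.contractEdge e).V :=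
  if h : v = G.src e then ⟨G.tgt e, fun _ => rfl⟩ else ⟨v, fun hv => absurd hv h⟩

theorem contractEdge_src (e' : (G.contractEdge e).E) :
    (G.contractEdge e).src e' = G.contractMap e (G.src e'.1) := rfl

theorem contractEdge_tgt (e' : (G.contractEdge e).E) :
    (G.contractEdge e).tgt e' = G.contractMap e (G.tgt e'.1) := rfl

theorem contractMap_val (v : G.V) :
    (G.contractMap e v).1 = if v = G.src e then G.tgt e else v := by
  by_cases h : v = G.src e <;> simp [contractMap, h]

theorem contractMap_src : G.contractMap e (G.src e) = ⟨G.tgt e, fun _ => rfl⟩ :=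
  Subtype.ext (by simp [contractMap_val])

theorem contractMap_coe (hne : G.src e ≠ G.tgt e) (x : (G.contractEdge e).V) :
    G.contractMap e x.1 = x :=
  Subtype.ext <| by
    rw [contractMap_val, if_neg fun h => hne (h.symm.trans (x.2 h))]

theorem contractMap_tgt (hne : G.src e ≠ G.tgt e) :
    G.contractMap e (G.tgt e) = ⟨G.tgt e, fun _ => rfl⟩ :=
  contractMap_coe hne ⟨G.tgt e, fun _ => rfl⟩

theorem apply_contractMap {α : Type*} (f : G.V → α) (hf : f (G.src e) = f (G.tgt e))
    (v : G.V) : f (G.contractMap e v).1 = f v := by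
  rw [contractMap_val]
  split_ifs with h
  · rw [h, hf]
  · rfl

theorem reachOn_contractMap (v : G.V) : G.ReachOn univ v (G.contractMap e v).1 := by
  rw [contractMap_val]
  split_ifs with h
  · exact h ▸ G.reachOn_univ_src_tgt e
  · exact EqvGen.refl v

def properColoringContractEdgeEquiv (hne : G.src e ≠ G.tgt e) (t : ℕ) :
    {f : (G.deleteEdge e).ProperColoring t // f.1 (G.src e) = f.1 (G.tgt e)} ≃
      (G.contractEdge e).ProperColoring t where
  toFun f := ⟨fun w => f.1.1 w.1, fun e' => by
    convert f.1.2 e' using 1 <;> exact apply_contractMap (e := e) f.1.1 f.2 _⟩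
  invFun g := ⟨⟨fun v => g.1 (G.contractMap e v), fun e' => g.2 e'⟩, by
    simp only [contractMap_src, contractMap_tgt hne]⟩
  left_inv f := Subtype.ext <| Subtype.ext <| funext <| apply_contractMap _ f.2
  right_inv g := Subtype.ext <| funext fun x => congrArg g.1 (contractMap_coe hne x)

theorem card_vertex_contractEdge (hne : G.src e ≠ G.tgt e) :
    Fintype.card (G.contractEdge e).V + 1 = Fintype.card G.V := by
  have hV : (G.contractEdge e).V ≃ {v : G.V // v ≠ G.src e} :=
    Equiv.subtypeEquivRight fun v =>
      ⟨fun h hv => hne (hv ▸ h hv), fun h hv => absurd hv h⟩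
  rw [Fintype.card_congr hV, ← Fintype.card_congr (Equiv.optionSubtypeNe (G.src e)),
    Fintype.card_option]

theorem numComponents_contractEdge (hne : G.src e ≠ G.tgt e) :
    (G.contractEdge e).numComponents = G.numComponents := by
  refine EqvGen.card_quotient_eq Subtype.val (fun x y => ⟨fun h => ?_, fun h => ?_⟩)
    fun v => ⟨G.contractMap e v, (G.reachOn_contractMap v).symm⟩
  · refine h.map _ ?_
    rintro _ _ ⟨e', -, rfl, rfl⟩
    exact ((G.reachOn_contractMap _).symm.trans _ _ _ (G.reachOn_univ_src_tgt e'.1)).trans _ _ _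
      (G.reachOn_contractMap _)
  · rw [← contractMap_coe hne x, ← contractMap_coe hne y]
    refine h.map _ ?_
    rintro _ _ ⟨e', -, rfl, rfl⟩
    by_cases he : e' = e
    · rw [he, contractMap_src, contractMap_tgt hne]
      exact EqvGen.refl _
    · exact (G.contractEdge e).reachOn_univ_src_tgt ⟨e', he⟩

theorem numComponents_deleteEdge (h : (G.deleteEdge e).ReachOn univ (G.src e) (G.tgt e)) :
    (G.deleteEdge e).numComponents = G.numComponents := by
  refine EqvGen.card_quotient_eq id (fun a b => ⟨EqvGen.mono ?_ a b, fun hab => hab.map id ?_⟩)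
    fun v => ⟨v, EqvGen.refl v⟩
  · rintro _ _ ⟨e', -, rfl, rfl⟩
    exact ⟨e'.1, mem_univ _, rfl, rfl⟩
  · rintro _ _ ⟨e', -, rfl, rfl⟩
    by_cases he : e' = e
    · exact he ▸ h
    · exact (G.deleteEdge e).reachOn_univ_src_tgt ⟨e', he⟩

/-- A loop of `G.contractEdge e` comes from an edge parallel to `e`, which joins the ends of `e`
in `G.deleteEdge e`. -/
theorem loopless_contractEdge (hG : G.Loopless)
    (h : ¬ (G.deleteEdge e).ReachOn univ (G.src e) (G.tgt e)) : (G.contractEdge e).Loopless := by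
  intro e' he'
  have hreach : (G.deleteEdge e).ReachOn univ (G.src e'.1) (G.tgt e'.1) :=
    (G.deleteEdge e).reachOn_univ_src_tgt e'
  have hval := congrArg Subtype.val he'
  simp only [contractEdge_src, contractEdge_tgt, contractMap_val] at hval
  split_ifs at hval with hs ht ht
  · exact hG e'.1 (hs.trans ht.symm)
  · rw [hs, ← hval] at hreach
    exact h hreach
  · rw [ht, hval] at hreach
    exact h hreach.symm
  · exact hG e'.1 hval

theorem properColorings_deleteEdge (hne : G.src e ≠ G.tgt e) (t : ℕ) :
    (G.deleteEdge e).properColorings t =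
      G.properColorings t + (G.contractEdge e).properColorings t := by
  rw [properColorings_eq_card,
    Nat.card_congr (Equiv.sumCompl fun f => f.1 (G.src e) = f.1 (G.tgt e)).symm, Nat.card_sum,
    Nat.card_congr (properColoringContractEdgeEquiv hne t),
    Nat.card_congr (properColoringDeleteEdgeEquiv e t), add_comm]
  rfl

section Shift

variable {H : Multigraph} {t : ℕ} {C : H.V → Prop} [DecidablePred C]

def ProperColoring.shift (hC : ∀ e, C (H.src e) ↔ C (H.tgt e)) (f : H.ProperColoring t)
    (s : Fin t) : H.ProperColoring t :=
  ⟨fun w => if C w then f.1 w + s else f.1 w, fun e => by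
    by_cases h : C (H.src e)
    · simpa only [if_pos h, if_pos ((hC e).1 h), ne_eq, add_left_inj] using f.2 e
    · simpa only [if_neg h, if_neg (mt (hC e).2 h)] using f.2 e⟩

variable (hC : ∀ e, C (H.src e) ↔ C (H.tgt e))

theorem ProperColoring.shift_apply (f : H.ProperColoring t) (s : Fin t) (w : H.V) :
    (f.shift hC s).1 w = if C w then f.1 w + s else f.1 w := rfl

theorem ProperColoring.shift_shift (f : H.ProperColoring t) (s s' : Fin t) :
    (f.shift hC s).shift hC s' = f.shift hC (s + s') := by
  ext w
  simp only [shift_apply]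
  split_ifs <;> simp [add_assoc]

variable [NeZero t]

theorem ProperColoring.shift_zero (f : H.ProperColoring t) : f.shift hC 0 = f := by
  ext w
  simp [shift_apply]

/-- No edge crosses the cut `C`, so shifting the colours on `C` makes those of `u ∈ C` and `v ∉ C`
agree in exactly one way. -/
def properColoringEquivProd {u v : H.V} (hu : C u) (hv : ¬ C v) :
    H.ProperColoring t ≃ Fin t × {f : H.ProperColoring t // f.1 u = f.1 v} where
  toFun f := (f.1 u - f.1 v, ⟨f.shift hC (f.1 v - f.1 u), by
    simp [ProperColoring.shift_apply, hu, hv]⟩)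
  invFun g := g.2.1.shift hC g.1
  left_inv f := by
    simp [ProperColoring.shift_shift, ProperColoring.shift_zero]
  right_inv g := by
    obtain ⟨s, f, hf⟩ := g
    ext1
    · simp [ProperColoring.shift_apply, hu, hv, hf]
    · ext1
      simp [ProperColoring.shift_shift, ProperColoring.shift_apply, hu, hv, hf,
        ProperColoring.shift_zero]

end Shift

theorem properColorings_deleteEdge_of_not_reachOn
    (h : ¬ (G.deleteEdge e).ReachOn univ (G.src e) (G.tgt e)) (t : ℕ) :
    (G.deleteEdge e).properColorings t = t * (G.contractEdge e).properColorings t := by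
  classical
  have hne : G.src e ≠ G.tgt e := fun he => h (he ▸ EqvGen.refl _)
  rcases t.eq_zero_or_pos with rfl | ht
  · rw [zero_mul, properColorings_eq_card]
    exact @Nat.card_of_isEmpty _ ⟨fun f => (f.1 (G.src e)).elim0⟩
  have : NeZero t := ⟨ht.ne'⟩
  let C : G.V → Prop := fun w => (G.deleteEdge e).ReachOn univ w (G.src e)
  have hC : ∀ e', C ((G.deleteEdge e).src e') ↔ C ((G.deleteEdge e).tgt e') := fun e' =>
    have h' := (G.deleteEdge e).reachOn_univ_src_tgt e'
    ⟨fun hs => h'.symm.trans _ _ _ hs, fun ht => h'.trans _ _ _ ht⟩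
  rw [properColorings_eq_card, Nat.card_congr (properColoringEquivProd hC (EqvGen.refl _)
      (fun hv => h (EqvGen.symm _ _ hv))), Nat.card_prod, Nat.card_eq_fintype_card,
    Fintype.card_fin, Nat.card_congr (properColoringContractEdgeEquiv hne t)]
  rfl

theorem IsChromaticPoly.unique {P Q : ℝ[X]} (hP : G.IsChromaticPoly P)
    (hQ : G.IsChromaticPoly Q) : P = Q := by
  refine eq_of_infinite_eval_eq P Q (Set.infinite_of_injective_forall_mem
    (f := fun n : ℕ => ((n + 1 : ℕ) : ℝ)) (fun a b hab => by simpa using hab) fun n => ?_)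
  simp only [Set.mem_ofPred_eq, hP _ n.succ_pos, hQ _ n.succ_pos]

theorem isChromaticPoly_deleteEdge_sub_contractEdge (hne : G.src e ≠ G.tgt e) {P₁ P₂ : ℝ[X]}
    (h₁ : (G.deleteEdge e).IsChromaticPoly P₁) (h₂ : (G.contractEdge e).IsChromaticPoly P₂) :
    G.IsChromaticPoly (P₁ - P₂) := fun k hk => by
  rw [eval_sub, h₁ k hk, h₂ k hk, properColorings_deleteEdge hne]
  push_cast
  ring

theorem exists_isChromaticPoly (G : Multigraph) : ∃ P, G.IsChromaticPoly P := by
  induction hn : Fintype.card G.E using Nat.strong_induction_on generalizing G with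
  | _ n ih =>
  rcases isEmpty_or_nonempty G.E with hE | ⟨⟨e⟩⟩
  · exact ⟨X ^ Fintype.card G.V, fun k _ => by simp [properColorings_of_isEmpty]⟩
  by_cases hloop : G.src e = G.tgt e
  · exact ⟨0, fun k _ => by simp [properColorings_eq_zero_of_loop hloop]⟩
  have hlt := hn ▸ card_edge_deleteEdge_lt e
  obtain ⟨P₁, h₁⟩ := ih _ hlt (G.deleteEdge e) rfl
  obtain ⟨P₂, h₂⟩ := ih _ hlt (G.contractEdge e) rfl
  exact ⟨P₁ - P₂, isChromaticPoly_deleteEdge_sub_contractEdge hloop h₁ h₂⟩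

noncomputable def chromaticPoly (G : Multigraph) : ℝ[X] := (exists_isChromaticPoly G).choose

theorem isChromaticPoly_chromaticPoly (G : Multigraph) : G.IsChromaticPoly G.chromaticPoly :=
  (exists_isChromaticPoly G).choose_spec

theorem IsChromaticPoly.chromaticPoly_eq {P : ℝ[X]} (hP : G.IsChromaticPoly P) :
    G.chromaticPoly = P :=
  G.isChromaticPoly_chromaticPoly.unique hP

theorem chromaticPoly_of_isEmpty [IsEmpty G.E] : G.chromaticPoly = X ^ Fintype.card G.V :=
  IsChromaticPoly.chromaticPoly_eq fun k _ => by simp [properColorings_of_isEmpty]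

theorem chromaticPoly_eq_zero_of_loop (he : G.src e = G.tgt e) : G.chromaticPoly = 0 :=
  IsChromaticPoly.chromaticPoly_eq fun k _ => by simp [properColorings_eq_zero_of_loop he]

theorem chromaticPoly_eq_sub (hne : G.src e ≠ G.tgt e) :
    G.chromaticPoly = (G.deleteEdge e).chromaticPoly - (G.contractEdge e).chromaticPoly :=
  (isChromaticPoly_deleteEdge_sub_contractEdge hne (isChromaticPoly_chromaticPoly _)
    (isChromaticPoly_chromaticPoly _)).chromaticPoly_eq

theorem chromaticPoly_deleteEdge_of_not_reachOn
    (h : ¬ (G.deleteEdge e).ReachOn univ (G.src e) (G.tgt e)) :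
    (G.deleteEdge e).chromaticPoly = X * (G.contractEdge e).chromaticPoly :=
  IsChromaticPoly.chromaticPoly_eq fun k hk => by
    rw [eval_mul, eval_X, (isChromaticPoly_chromaticPoly _) k hk,
      properColorings_deleteEdge_of_not_reachOn h, Nat.cast_mul]

theorem neg_one_pow_mul_eval_chromaticPoly_pos (hG : G.Loopless) {t : ℝ} (ht0 : 0 < t)
    (ht1 : t < 1) :
    0 < (-1 : ℝ) ^ (Fintype.card G.V + G.numComponents) * G.chromaticPoly.eval t := by
  induction hn : Fintype.card G.E using Nat.strong_induction_on generalizing G with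
  | _ n ih =>
  rcases isEmpty_or_nonempty G.E with hE | ⟨⟨e⟩⟩
  · rw [chromaticPoly_of_isEmpty, numComponents_of_isEmpty, ← two_mul, pow_mul, neg_one_sq,
      one_pow, one_mul, eval_pow, eval_X]
    positivity
  have hne := hG e
  have hlt := hn ▸ card_edge_deleteEdge_lt e
  set s := (-1 : ℝ) ^ (Fintype.card (G.contractEdge e).V + G.numComponents)
  have hsign : (-1 : ℝ) ^ (Fintype.card G.V + G.numComponents) = -s := by
    rw [← card_vertex_contractEdge hne]
    ring
  have ih_contract (hGc : (G.contractEdge e).Loopless) :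
      0 < s * (G.contractEdge e).chromaticPoly.eval t := by
    simpa only [numComponents_contractEdge hne] using ih _ hlt hGc rfl
  rw [hsign, chromaticPoly_eq_sub hne, eval_sub]
  by_cases hr : (G.deleteEdge e).ReachOn univ (G.src e) (G.tgt e)
  · have h₁ : 0 < -s * (G.deleteEdge e).chromaticPoly.eval t := by
      rw [← hsign, ← numComponents_deleteEdge hr]
      exact ih _ hlt (G := G.deleteEdge e) (fun e' => hG e'.1) rfl
    have h₂ : 0 ≤ s * (G.contractEdge e).chromaticPoly.eval t := by
      by_cases hGc : (G.contractEdge e).Loopless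
      · exact (ih_contract hGc).le
      · obtain ⟨e', he'⟩ := not_forall_not.1 hGc
        rw [chromaticPoly_eq_zero_of_loop he', eval_zero, mul_zero]
    linarith
  · have h₂ := ih_contract (loopless_contractEdge hG hr)
    rw [chromaticPoly_deleteEdge_of_not_reachOn hr, eval_mul, eval_X]
    calc 0 < (1 - t) * (s * (G.contractEdge e).chromaticPoly.eval t) :=
          mul_pos (sub_pos.2 ht1) h₂
      _ = _ := by ring

end Multigraph

/-- For a loopless graph with `n` vertices and `c` components, `P(G,t)` is non-zero
with sign `(-1)^(n+c)` on `(0, 1)`. -/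
theorem chromatic_nonzero_zero_one (G : Multigraph) (hG : G.Loopless)
    (P : Polynomial ℝ) (hP : G.IsChromaticPoly P)
    (t : ℝ) (ht0 : 0 < t) (ht1 : t < 1) :
    0 < (-1 : ℝ) ^ (Fintype.card G.V + G.numComponents) * P.eval t := by
  rw [← hP.chromaticPoly_eq]
  exact G.neg_one_pow_mul_eval_chromaticPoly_pos hG ht0 ht1
end

section
/- A finite graph G has a nowhere-zero t-flow (an integer-valued flow f with 0 < |f(e)| ≤ t−1 on every edge) if and only if G has a nowhere-zero Z_t-flow. -/
open Polynomial

/-!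
Reducing an integer nowhere-zero `t`-flow modulo `t` gives a nowhere-zero `ℤ/t`-flow.
Conversely, lift a `ℤ/t`-flow `g` to integers `f` with `f e ≡ g e` and `0 < |f e| < t`; every
divergence of such a lift is a multiple of `t`, and each value `f e` may be flipped to
`f e ∓ t`, which moves `t` units of divergence across `e` in the direction `f e` flows. Take a
lift minimising `∑ v, |divergence f v|`. If some divergence is nonzero, pick `v` with positive
divergence. The set of vertices reachable from `v` by such moves has no edge leaving it with
positive flow or entering it with negative flow, so its total divergence is `≤ 0` and it
contains a vertex `w` of negative divergence. Pushing the excess of `v` step by step along a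
walk to `w` never increases the potential, and the last step strictly decreases it.
-/

lemma Relation.ReflTransGen.of_imp_or_eq {α : Type*} {r r' : α → α → Prop} {c w : α}
    (h : ∀ x y, r x y → r' x y ∨ y = c) (hw : ReflTransGen r c w) : ReflTransGen r' c w := by
  induction hw with
  | refl => rfl
  | tail _ hxy ih =>
    rcases h _ _ hxy with hxy' | rfl
    · exact ih.tail hxy'
    · rfl

lemma Finset.sum_abs_transfer {ι : Type*} [Fintype ι] [DecidableEq ι] (d : ι → ℤ) {a b : ι}
    (hab : a ≠ b) (c : ℤ) :
    ∑ x, |d x - (if a = x then c else 0) + (if b = x then c else 0)| =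
      ∑ x, |d x| + (|d a - c| - |d a|) + (|d b + c| - |d b|) := by
  rw [add_assoc, ← sub_eq_iff_eq_add', ← Finset.sum_sub_distrib,
    Fintype.sum_eq_add a b hab fun x hx => by simp [Ne.symm hx.1, Ne.symm hx.2]]
  simp [hab, Ne.symm hab]

lemma Int.abs_sub_mul_sign_lt {x t : ℤ} (hx : x ≠ 0) (h : |x| < t) : |x - t * x.sign| < t := by
  rw [abs_lt] at h ⊢
  rcases hx.lt_or_gt with hneg | hpos
  · rw [Int.sign_eq_neg_one_of_neg hneg]; omega
  · rw [Int.sign_eq_one_of_pos hpos]; omega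

namespace Multigraph

open Finset Relation

variable {G : Multigraph}

section Divergence

variable {M : Type*} [AddCommGroup M]

def divergence (f : G.E → M) (v : G.V) : M :=
  (∑ e : G.E, if G.src e = v then f e else 0) - ∑ e : G.E, if G.tgt e = v then f e else 0

lemma map_divergence {N : Type*} [AddCommGroup N] (φ : M →+ N) (f : G.E → M) (v : G.V) :
    φ (divergence f v) = divergence (φ ∘ f) v := by
  simp [divergence, map_sum, apply_ite φ]

lemma isNZFlow_iff {t : ℕ} (g : G.E → ZMod t) :
    G.IsNZFlow g ↔ (∀ e, g e ≠ 0) ∧ ∀ v, divergence g v = 0 := by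
  simp only [IsNZFlow, divergence, sub_eq_zero]

lemma sum_divergence_eq (f : G.E → M) (X : Finset G.V) :
    ∑ x ∈ X, divergence f x =
      ∑ e, ((if G.src e ∈ X then f e else 0) - if G.tgt e ∈ X then f e else 0) := by
  simp only [divergence, sum_sub_distrib]
  rw [sum_comm, sum_comm (s := X)]
  simp [sum_ite_eq]

lemma sum_divergence (f : G.E → M) : ∑ v, divergence f v = 0 := by
  simp [sum_divergence_eq]

lemma divergence_update (f : G.E → M) (e : G.E) (y : M) (x : G.V) :
    divergence (Function.update f e y) x = divergence f x +
      ((if G.src e = x then y - f e else 0) - if G.tgt e = x then y - f e else 0) := by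
  have key (p : G.E → G.V) : (∑ e', if p e' = x then Function.update f e y e' else 0) =
      (∑ e', if p e' = x then f e' else 0) + if p e = x then y - f e else 0 := by
    rw [← sub_eq_iff_eq_add', ← sum_sub_distrib,
      sum_eq_single e (fun e' _ he' => by simp [he']) (by simp)]
    split_ifs <;> simp
  simp only [divergence, key]
  abel

end Divergence

/-- Flipping `e` moves `t` units of divergence from `a` to `b` (`divergence_flipEdge`). -/
def ResidualStep (f : G.E → ℤ) (e : G.E) (a b : G.V) : Prop :=
  (0 < f e ∧ G.src e = a ∧ G.tgt e = b) ∨ (f e < 0 ∧ G.src e = b ∧ G.tgt e = a)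

def ResidualAdj (f : G.E → ℤ) (A : Finset G.E) (a b : G.V) : Prop :=
  ∃ e ∈ A, ResidualStep f e a b

lemma ResidualStep.ne_zero {f : G.E → ℤ} {e : G.E} {a b : G.V} (h : ResidualStep f e a b) :
    f e ≠ 0 := by
  rcases h with ⟨h, -⟩ | ⟨h, -⟩ <;> omega

lemma ResidualStep.right_unique {f : G.E → ℤ} {e : G.E} {a b a' b' : G.V}
    (h : ResidualStep f e a b) (h' : ResidualStep f e a' b') : b = b' := by
  rcases h with ⟨h, -, rfl⟩ | ⟨h, rfl, -⟩ <;> rcases h' with ⟨h', -, rfl⟩ | ⟨h', rfl, -⟩ <;>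
    first | rfl | omega

lemma residualAdj_congr {f f' : G.E → ℤ} {A : Finset G.E} (h : ∀ e ∈ A, f e = f' e) :
    ResidualAdj f A = ResidualAdj f' A := by
  ext a b
  simp only [ResidualAdj, ResidualStep]
  exact exists_congr fun e => and_congr_right fun he => by rw [h e he]

lemma sum_divergence_nonpos_of_closed (f : G.E → ℤ) (X : Finset G.V)
    (hX : ∀ a b, a ∈ X → ResidualAdj f univ a b → b ∈ X) : ∑ x ∈ X, divergence f x ≤ 0 := by
  rw [sum_divergence_eq]
  refine sum_nonpos fun e _ => ?_
  have hout : G.src e ∈ X → G.tgt e ∉ X → f e ≤ 0 := fun hs ht => by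
    by_contra! hpos
    exact ht (hX _ _ hs ⟨e, mem_univ e, .inl ⟨hpos, rfl, rfl⟩⟩)
  have hin : G.tgt e ∈ X → G.src e ∉ X → 0 ≤ f e := fun ht hs => by
    by_contra! hneg
    exact hs (hX _ _ ht ⟨e, mem_univ e, .inr ⟨hneg, rfl, rfl⟩⟩)
  split_ifs with hs ht <;> grind

def flipEdge (t : ℕ) (f : G.E → ℤ) (e : G.E) : G.E → ℤ :=
  Function.update f e (f e - t * (f e).sign)

lemma divergence_flipEdge {t : ℕ} {f : G.E → ℤ} {e : G.E} {a b : G.V}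
    (h : ResidualStep f e a b) (x : G.V) :
    divergence (flipEdge t f e) x =
      divergence f x - (if a = x then (t : ℤ) else 0) + (if b = x then (t : ℤ) else 0) := by
  rw [flipEdge, divergence_update]
  rcases h with ⟨h, rfl, rfl⟩ | ⟨h, rfl, rfl⟩
  · rw [Int.sign_eq_one_of_pos h]
    split_ifs <;> ring
  · rw [Int.sign_eq_neg_one_of_neg h]
    split_ifs <;> ring

def potential (f : G.E → ℤ) : ℤ := ∑ v, |divergence f v|

lemma potential_flipEdge {t : ℕ} {f : G.E → ℤ} {e : G.E} {a b : G.V}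
    (h : ResidualStep f e a b) (hab : a ≠ b) :
    potential (flipEdge t f e) = potential f +
      (|divergence f a - t| - |divergence f a|) + (|divergence f b + t| - |divergence f b|) := by
  simp only [potential, divergence_flipEdge h]
  exact sum_abs_transfer _ hab _

lemma potential_flipEdge_le {t : ℕ} {f : G.E → ℤ} {e : G.E} {a b : G.V}
    (h : ResidualStep f e a b) (hab : a ≠ b) (ha : (t : ℤ) ≤ divergence f a) :
    potential (flipEdge t f e) ≤ potential f := by
  rw [potential_flipEdge h hab, abs_of_nonneg (sub_nonneg.2 ha),
    abs_of_nonneg ((Int.natCast_nonneg t).trans ha)]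
  linarith [abs_add_le (divergence f b) t, abs_of_nonneg (Int.natCast_nonneg t)]

lemma potential_flipEdge_lt {t : ℕ} {f : G.E → ℤ} {e : G.E} {a b : G.V}
    (h : ResidualStep f e a b) (ht : 0 < t) (ha : (t : ℤ) ≤ divergence f a)
    (hb : divergence f b ≤ -t) : potential (flipEdge t f e) < potential f := by
  have hab : a ≠ b := by rintro rfl; omega
  rw [potential_flipEdge h hab, abs_of_nonneg (sub_nonneg.2 ha), abs_of_nonneg (by omega),
    abs_of_nonpos (by omega), abs_of_neg (by omega)]
  omega

section Lift

variable {t : ℕ} {g : G.E → ZMod t}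

def IsBoundedLift (g : G.E → ZMod t) (f : G.E → ℤ) : Prop :=
  ∀ e, (f e : ZMod t) = g e ∧ |f e| < t

lemma exists_isBoundedLift [NeZero t] (g : G.E → ZMod t) : ∃ f, IsBoundedLift g f :=
  ⟨fun e => (g e).val, fun e =>
    ⟨by simp, by rw [abs_of_nonneg (Int.natCast_nonneg _)]; exact_mod_cast ZMod.val_lt (g e)⟩⟩

lemma finite_setOf_isBoundedLift (g : G.E → ZMod t) : {f | IsBoundedLift g f}.Finite :=
  (Set.Finite.pi' fun _ => Set.finite_Ioo (-(t : ℤ)) t).subset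
    fun _ hf e => abs_lt.1 (hf e).2

lemma IsBoundedLift.ne_zero (hg₀ : ∀ e, g e ≠ 0) {f : G.E → ℤ} (hf : IsBoundedLift g f)
    (e : G.E) : f e ≠ 0 :=
  fun h => hg₀ e (by rw [← (hf e).1, h, Int.cast_zero])

lemma IsBoundedLift.flipEdge (hg₀ : ∀ e, g e ≠ 0) {f : G.E → ℤ} (hf : IsBoundedLift g f)
    (e : G.E) : IsBoundedLift g (flipEdge t f e) := by
  intro e'
  rcases eq_or_ne e' e with rfl | he
  · obtain ⟨hcast, hlt⟩ := hf e'
    simpa [Multigraph.flipEdge, hcast] using Int.abs_sub_mul_sign_lt (hf.ne_zero hg₀ e') hlt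
  · simpa [Multigraph.flipEdge, he] using hf e'

lemma IsBoundedLift.dvd_divergence (hg : ∀ v, divergence g v = 0) {f : G.E → ℤ}
    (hf : IsBoundedLift g f) (v : G.V) : (t : ℤ) ∣ divergence f v := by
  rw [← ZMod.intCast_zmod_eq_zero_iff_dvd]
  have hcast : Int.castAddHom (ZMod t) ∘ f = g := funext fun e => (hf e).1
  change Int.castAddHom (ZMod t) (divergence f v) = 0
  rw [map_divergence, hcast, hg v]

lemma exists_potential_lt_of_reflTransGen (hg₀ : ∀ e, g e ≠ 0)
    (hg : ∀ v, divergence g v = 0) (A : Finset G.E) {f : G.E → ℤ} {v w : G.V}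
    (hf : IsBoundedLift g f) (hv : 0 < divergence f v) (hw : divergence f w < 0)
    (hvw : ReflTransGen (ResidualAdj f A) v w) :
    ∃ f', IsBoundedLift g f' ∧ potential f' < potential f := by
  induction A using Finset.strongInduction generalizing f v with
  | H A ih =>
    obtain rfl | ⟨c, ⟨e, he, hstep⟩, hcw⟩ := hvw.cases_head
    · exact absurd hv hw.asymm
    -- the only residual step along `e` ends at `c`, so a walk from `c` does not need `e`
    have hcw' : ReflTransGen (ResidualAdj f (A.erase e)) c w :=
      hcw.of_imp_or_eq fun x y ⟨e', he', hxy⟩ => by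
        by_cases hee : e' = e
        · subst hee
          exact .inr (hxy.right_unique hstep)
        · exact .inl ⟨e', mem_erase.2 ⟨hee, he'⟩, hxy⟩
    have ht : 0 < t := by exact_mod_cast (abs_pos.2 hstep.ne_zero).trans (hf e).2
    have hdvd := hf.dvd_divergence hg
    have hva : (t : ℤ) ≤ divergence f v := Int.le_of_dvd hv (hdvd v)
    by_cases hvc : v = c
    · subst hvc
      exact ih _ (erase_ssubset he) hf hv hw hcw'
    by_cases hc : divergence f c < 0
    · have hcb : divergence f c ≤ -t :=
        le_neg.1 (Int.le_of_dvd (neg_pos.2 hc) (hdvd c).neg_right)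
      exact ⟨_, hf.flipEdge hg₀ e, potential_flipEdge_lt hstep ht hva hcb⟩
    replace hc := not_lt.1 hc
    have hwv : v ≠ w := by rintro rfl; omega
    have hwc : c ≠ w := by rintro rfl; omega
    have hcw'' : ReflTransGen (ResidualAdj (flipEdge t f e) (A.erase e)) c w := by
      rwa [residualAdj_congr fun e' he' => Function.update_of_ne (ne_of_mem_erase he') _ _]
    obtain ⟨f', hf', hlt⟩ := ih _ (erase_ssubset he) (hf.flipEdge hg₀ e)
      (by rw [divergence_flipEdge hstep, if_neg hvc, if_pos rfl]; omega)
      (by rwa [divergence_flipEdge hstep, if_neg hwv, if_neg hwc, sub_zero, add_zero]) hcw''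
    exact ⟨f', hf', hlt.trans_le (potential_flipEdge_le hstep hvc hva)⟩

lemma exists_potential_lt (hg₀ : ∀ e, g e ≠ 0) (hg : ∀ v, divergence g v = 0)
    {f : G.E → ℤ} (hf : IsBoundedLift g f) (hne : ∃ v, divergence f v ≠ 0) :
    ∃ f', IsBoundedLift g f' ∧ potential f' < potential f := by
  obtain ⟨v, hv⟩ : ∃ v, 0 < divergence f v := by
    by_contra! h
    obtain ⟨x, hx⟩ := hne
    exact hx ((sum_eq_zero_iff_of_nonpos fun v _ => h v).1 (sum_divergence f) x (mem_univ x))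
  classical
  let X := univ.filter (ReflTransGen (ResidualAdj f univ) v)
  have hvX : v ∈ X := mem_filter.2 ⟨mem_univ v, .refl⟩
  have hX : ∀ a b, a ∈ X → ResidualAdj f univ a b → b ∈ X := fun a b ha hab =>
    mem_filter.2 ⟨mem_univ b, (mem_filter.1 ha).2.tail hab⟩
  obtain ⟨w, hwX, hw⟩ : ∃ w ∈ X, divergence f w < 0 := by
    by_contra! h
    linarith [single_le_sum h hvX, sum_divergence_nonpos_of_closed f X hX]
  exact exists_potential_lt_of_reflTransGen hg₀ hg univ hf hv hw (mem_filter.1 hwX).2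

lemma exists_isBoundedLift_divergence_eq_zero [NeZero t] (hg₀ : ∀ e, g e ≠ 0)
    (hg : ∀ v, divergence g v = 0) : ∃ f, IsBoundedLift g f ∧ ∀ v, divergence f v = 0 := by
  obtain ⟨f, hf, hmin⟩ := Set.exists_min_image _ potential (finite_setOf_isBoundedLift g)
    (exists_isBoundedLift g)
  refine ⟨f, hf, fun v => ?_⟩
  by_contra hv
  obtain ⟨f', hf', hlt⟩ := exists_potential_lt hg₀ hg hf ⟨v, hv⟩
  exact (hmin f' hf').not_gt hlt

end Lift

lemma isNZFlow_intCast {t : ℕ} {f : G.E → ℤ} (hf : ∀ e, f e ≠ 0 ∧ |f e| < t)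
    (hcons : ∀ v, divergence f v = 0) : G.IsNZFlow fun e => (f e : ZMod t) := by
  refine (isNZFlow_iff _).2 ⟨fun e h => (hf e).1 ?_, fun v => ?_⟩
  · exact Int.eq_zero_of_abs_lt_dvd ((ZMod.intCast_zmod_eq_zero_iff_dvd _ _).1 h) (hf e).2
  · rw [show (fun e => (f e : ZMod t)) = Int.castAddHom (ZMod t) ∘ f from rfl,
      ← map_divergence, hcons v, map_zero]

end Multigraph

/-- Tutte's theorem: `G` has a nowhere-zero `t`-flow (an integer flow `f` with
`0 < |f e| ≤ t - 1` on every edge) if and only if `G` has a nowhere-zero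
`ZMod t`-flow. -/
theorem nz_int_flow_iff_zmod_flow (G : Multigraph) (t : ℕ) (ht : 0 < t) :
    (∃ f : G.E → ℤ,
      (∀ v : G.V, (∑ e : G.E, if G.src e = v then f e else 0) =
        ∑ e : G.E, if G.tgt e = v then f e else 0) ∧
      ∀ e : G.E, f e ≠ 0 ∧ |f e| ≤ (t : ℤ) - 1) ↔
    ∃ g : G.E → ZMod t, G.IsNZFlow g := by
  constructor
  · rintro ⟨f, hcons, hf⟩
    exact ⟨_, Multigraph.isNZFlow_intCast (fun e => ⟨(hf e).1, Int.le_sub_one_iff.1 (hf e).2⟩)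
      fun v => sub_eq_zero.2 (hcons v)⟩
  · rintro ⟨g, hg⟩
    obtain ⟨hg₀, hg⟩ := (Multigraph.isNZFlow_iff g).1 hg
    have : NeZero t := ⟨ht.ne'⟩
    obtain ⟨f, hf, hcons⟩ := Multigraph.exists_isBoundedLift_divergence_eq_zero hg₀ hg
    exact ⟨f, fun v => sub_eq_zero.1 (hcons v),
      fun e => ⟨hf.ne_zero hg₀ e, Int.le_sub_one_iff.2 (hf e).2⟩⟩
end
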